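/- Let J be a Jacobi field adapted to a complete geodesic unit vector field X on a Riemannian manifold. Then J vanishes identically if and only if J(t₀) = 0 for some t₀ ∈ ℝ. -/

import Mathlib

noncomputable section
open scoped Manifold
open Set Function MeasureTheory

/-! ### Basic notions: smooth functions, vector fields, directional derivatives -/

section Basic

variable {n : ℕ} {M : Type*} [TopologicalSpace M] [ChartedSpace (EuclideanSpace ℝ (Fin n)) M]
  [IsManifold (𝓡 n) (⊤ : ℕ∞) M]

/-- Smooth real-valued functions on a manifold `M` modelled on `ℝⁿ`. -/
def SmoothFn (n : ℕ) (M : Type*) [TopologicalSpace M]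
    [ChartedSpace (EuclideanSpace ℝ (Fin n)) M] (f : M → ℝ) : Prop :=
  ContMDiff (𝓡 n) 𝓘(ℝ, ℝ) (⊤ : ℕ∞) f

/-- Smooth vector fields on `M`, i.e. smooth sections of the tangent bundle. -/
def SmoothVF {M : Type*} [TopologicalSpace M] [ChartedSpace (EuclideanSpace ℝ (Fin n)) M]
    [IsManifold (𝓡 n) (⊤ : ℕ∞) M] (X : ∀ p : M, TangentSpace (𝓡 n) p) : Prop :=
  ContMDiff (𝓡 n) (𝓡 n).tangent (⊤ : ℕ∞) (fun p => (⟨p, X p⟩ : TangentBundle (𝓡 n) M))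

/-- The derivative of a function `f : M → ℝ` at `p` in the direction `v`. -/
def dirD (f : M → ℝ) (p : M) (v : TangentSpace (𝓡 n) p) : ℝ :=
  mfderiv (𝓡 n) 𝓘(ℝ, ℝ) f p v

/-- `z` is the value at `p` of the Lie bracket `[X, Y]` of the vector fields `X` and `Y`,
characterised through the action of vector fields on smooth functions:
`[X,Y] f = X (Y f) - Y (X f)`. -/
def IsLieBracketAt (X Y : ∀ p : M, TangentSpace (𝓡 n) p) (p : M)
    (z : TangentSpace (𝓡 n) p) : Prop :=
  ∀ f : M → ℝ, SmoothFn n M f →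
    dirD f p z =
      dirD (fun q => dirD f q (Y q)) p (X p) - dirD (fun q => dirD f q (X q)) p (Y p)

end Basic

/-! ### Riemannian metrics and the Levi-Civita connection -/

/-- A Riemannian metric on `M`: a smooth family of symmetric positive definite bilinear forms. -/
structure RiemannianMetric (n : ℕ) (M : Type*) [TopologicalSpace M]
    [ChartedSpace (EuclideanSpace ℝ (Fin n)) M] [IsManifold (𝓡 n) (⊤ : ℕ∞) M] where
  g : ∀ p : M, TangentSpace (𝓡 n) p →ₗ[ℝ] TangentSpace (𝓡 n) p →ₗ[ℝ] ℝ
  symm : ∀ p v w, g p v w = g p w v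
  posdef : ∀ p v, v ≠ 0 → 0 < g p v v
  smooth : ∀ V W : ∀ p : M, TangentSpace (𝓡 n) p, SmoothVF V → SmoothVF W →
    SmoothFn n M fun p => g p (V p) (W p)

/-- The Levi-Civita connection of a Riemannian metric, encoded as a first-order differential
operator `cov` (the covariant derivative of a vector field in the direction of a tangent
vector), which is torsion free and compatible with the metric.  These axioms determine it
uniquely. -/
structure LeviCivitaConnection (n : ℕ) (M : Type*) [TopologicalSpace M]
    [ChartedSpace (EuclideanSpace ℝ (Fin n)) M] [IsManifold (𝓡 n) (⊤ : ℕ∞) M]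
    (G : RiemannianMetric n M) where
  cov : ∀ p : M, TangentSpace (𝓡 n) p → (∀ q : M, TangentSpace (𝓡 n) q) → TangentSpace (𝓡 n) p
  cov_add_dir : ∀ p v w Y, cov p (v + w) Y = cov p v Y + cov p w Y
  cov_smul_dir : ∀ p (c : ℝ) v Y, cov p (c • v) Y = c • cov p v Y
  cov_add : ∀ p v Y Z, cov p v (fun q => Y q + Z q) = cov p v Y + cov p v Z
  cov_leibniz : ∀ p v (f : M → ℝ), SmoothFn n M f → ∀ Y,
    cov p v (fun q => f q • Y q) = dirD f p v • Y p + f p • cov p v Y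
  cov_smooth : ∀ V X, SmoothVF V → SmoothVF X → SmoothVF fun p => cov p (V p) X
  compat : ∀ Y Z, SmoothVF Y → SmoothVF Z → ∀ p v,
    dirD (fun q => G.g q (Y q) (Z q)) p v = G.g p (cov p v Y) (Z p) + G.g p (Y p) (cov p v Z)
  torsion_free : ∀ X Y, SmoothVF X → SmoothVF Y → ∀ p,
    IsLieBracketAt X Y p (cov p (X p) Y - cov p (Y p) X)

namespace LeviCivitaConnection

variable {n : ℕ} {M : Type*} [TopologicalSpace M]
  [ChartedSpace (EuclideanSpace ℝ (Fin n)) M] [IsManifold (𝓡 n) (⊤ : ℕ∞) M]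
  {G : RiemannianMetric n M}

/-- The (1,1)-tensor `β = ∇X : v ↦ ∇_v X` associated with a vector field `X`. -/
def beta (D : LeviCivitaConnection n M G) (X : ∀ p : M, TangentSpace (𝓡 n) p) (p : M) :
    TangentSpace (𝓡 n) p →ₗ[ℝ] TangentSpace (𝓡 n) p where
  toFun v := D.cov p v X
  map_add' v w := D.cov_add_dir p v w X
  map_smul' c v := D.cov_smul_dir p c v X

/-- `X` is a geodesic vector field: `∇_X X = 0`, i.e. all flow lines of `X` are geodesics. -/
def IsGeodesicField (D : LeviCivitaConnection n M G)
    (X : ∀ p : M, TangentSpace (𝓡 n) p) : Prop :=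
  ∀ p : M, D.cov p (X p) X = 0

end LeviCivitaConnection

/-- `X` is a unit vector field for the metric `G`. -/
def IsUnitField {n : ℕ} {M : Type*} [TopologicalSpace M]
    [ChartedSpace (EuclideanSpace ℝ (Fin n)) M] [IsManifold (𝓡 n) (⊤ : ℕ∞) M]
    (G : RiemannianMetric n M) (X : ∀ p : M, TangentSpace (𝓡 n) p) : Prop :=
  ∀ p : M, G.g p (X p) (X p) = 1

/-- The exterior derivative of a `1`-form `α`, evaluated on a pair of vector fields, computed
via the torsion-free connection `D`:
`dα(V,W) = V(α(W)) - W(α(V)) - α([V,W])`, where `[V,W] = ∇_V W - ∇_W V`. -/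
def extDerivVF {n : ℕ} {M : Type*} [TopologicalSpace M]
    [ChartedSpace (EuclideanSpace ℝ (Fin n)) M] [IsManifold (𝓡 n) (⊤ : ℕ∞) M]
    {G : RiemannianMetric n M} (D : LeviCivitaConnection n M G)
    (α : ∀ p : M, TangentSpace (𝓡 n) p →ₗ[ℝ] ℝ)
    (V W : ∀ p : M, TangentSpace (𝓡 n) p) (p : M) : ℝ :=
  dirD (fun q => α q (W q)) p (V p) - dirD (fun q => α q (V q)) p (W p)
    - α p (D.cov p (V p) W - D.cov p (W p) V)

/-- The `1`-form `α = i_X g` dual to the vector field `X`. -/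
def dualOneForm {n : ℕ} {M : Type*} [TopologicalSpace M]
    [ChartedSpace (EuclideanSpace ℝ (Fin n)) M] [IsManifold (𝓡 n) (⊤ : ℕ∞) M]
    (G : RiemannianMetric n M) (X : ∀ p : M, TangentSpace (𝓡 n) p) (p : M) :
    TangentSpace (𝓡 n) p →ₗ[ℝ] ℝ :=
  G.g p (X p)

/-- The orthogonal distribution `X^⊥` at the point `p`. -/
def perpAt {n : ℕ} {M : Type*} [TopologicalSpace M]
    [ChartedSpace (EuclideanSpace ℝ (Fin n)) M] [IsManifold (𝓡 n) (⊤ : ℕ∞) M]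
    (G : RiemannianMetric n M) (X : ∀ p : M, TangentSpace (𝓡 n) p) (p : M) :
    Submodule ℝ (TangentSpace (𝓡 n) p) :=
  LinearMap.ker ((G.g p).flip (X p))

/-- The plane field `X^⊥` orthogonal to `X` is a contact plane field at `p`: on a `3`-manifold
this says that `(α ∧ dα)(p) ≠ 0` for `α = i_X g`, equivalently that `dα` does not vanish on
`X^⊥` at `p`. -/
def PerpIsContactAt {M : Type*} [TopologicalSpace M]
    [ChartedSpace (EuclideanSpace ℝ (Fin 3)) M] [IsManifold (𝓡 3) (⊤ : ℕ∞) M]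
    (G : RiemannianMetric 3 M) (D : LeviCivitaConnection 3 M G)
    (X : ∀ p : M, TangentSpace (𝓡 3) p) (p : M) : Prop :=
  ∃ V W : ∀ q : M, TangentSpace (𝓡 3) q, SmoothVF V ∧ SmoothVF W ∧
    V p ∈ perpAt G X p ∧ W p ∈ perpAt G X p ∧ extDerivVF D (dualOneForm G X) V W p ≠ 0

/-- `X` induces a contact structure: the orthogonal plane field `X^⊥` is a contact structure. -/
def InducesContactStructure {M : Type*} [TopologicalSpace M]
    [ChartedSpace (EuclideanSpace ℝ (Fin 3)) M] [IsManifold (𝓡 3) (⊤ : ℕ∞) M]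
    (G : RiemannianMetric 3 M) (D : LeviCivitaConnection 3 M G)
    (X : ∀ p : M, TangentSpace (𝓡 3) p) : Prop :=
  ∀ p : M, PerpIsContactAt G D X p

/-! ### Flows of vector fields -/

/-- `φ` is the (complete, global) flow of the vector field `X`. -/
structure IsFlowOf {n : ℕ} {M : Type*} [TopologicalSpace M]
    [ChartedSpace (EuclideanSpace ℝ (Fin n)) M] [IsManifold (𝓡 n) (⊤ : ℕ∞) M]
    (φ : ℝ → M → M) (X : ∀ p : M, TangentSpace (𝓡 n) p) : Prop where
  smooth : ContMDiff (𝓘(ℝ, ℝ).prod (𝓡 n)) (𝓡 n) (⊤ : ℕ∞) fun q : ℝ × M => φ q.1 q.2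
  map_zero : ∀ p, φ 0 p = p
  map_add : ∀ s t p, φ (s + t) p = φ s (φ t p)
  isIntegralCurve : ∀ p, IsMIntegralCurve (fun t => φ t p) X

/-- A Jacobi field along the flow line of `φ` through `p` which is *adapted* to the underlying
(geodesic) vector field: it arises as the variational field of a variation
`Γ(s,t) = φ t (c s)` through integral curves of the vector field. -/
def IsAdaptedJacobiField {n : ℕ} {M : Type*} [TopologicalSpace M]
    [ChartedSpace (EuclideanSpace ℝ (Fin n)) M] [IsManifold (𝓡 n) (⊤ : ℕ∞) M]
    (φ : ℝ → M → M) (p : M) (J : ∀ t : ℝ, TangentSpace (𝓡 n) (φ t p)) : Prop :=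
  ∃ c : ℝ → M, ContMDiff 𝓘(ℝ, ℝ) (𝓡 n) (⊤ : ℕ∞) c ∧ c 0 = p ∧
    ∀ t : ℝ, J t = mfderiv 𝓘(ℝ, ℝ) (𝓡 n) (fun s => φ t (c s)) 0 (1 : ℝ)

/-! The variation `Γ(s, t) = φ t (c s)` satisfies `Γ(·, t) = φ (t - t₀) ∘ Γ(·, t₀)` by the group
law of the flow, so by the chain rule `J t` is the image of `J t₀` under the linear map
`d(φ (t - t₀))`; in particular it vanishes as soon as `J t₀` does. -/

namespace IsFlowOf

variable {n : ℕ} {M : Type*} [TopologicalSpace M]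
  [ChartedSpace (EuclideanSpace ℝ (Fin n)) M] [IsManifold (𝓡 n) (⊤ : ℕ∞) M]
  {φ : ℝ → M → M} {X : ∀ p : M, TangentSpace (𝓡 n) p}

theorem contMDiff_apply (hφ : IsFlowOf φ X) (t : ℝ) :
    ContMDiff (𝓡 n) (𝓡 n) (⊤ : ℕ∞) (φ t) :=
  hφ.smooth.comp (contMDiff_const.prodMk contMDiff_id)

theorem apply_sub_apply (hφ : IsFlowOf φ X) (t₀ t : ℝ) (q : M) :
    φ (t - t₀) (φ t₀ q) = φ t q := by
  rw [← hφ.map_add, sub_add_cancel]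

end IsFlowOf

theorem IsAdaptedJacobiField.eq_mfderiv_flow {n : ℕ} {M : Type*} [TopologicalSpace M]
    [ChartedSpace (EuclideanSpace ℝ (Fin n)) M] [IsManifold (𝓡 n) (⊤ : ℕ∞) M]
    {φ : ℝ → M → M} {X : ∀ p : M, TangentSpace (𝓡 n) p} (hφ : IsFlowOf φ X) {p : M}
    {J : ∀ t : ℝ, TangentSpace (𝓡 n) (φ t p)} (hJ : IsAdaptedJacobiField φ p J) (t₀ t : ℝ) :
    J t = mfderiv (𝓡 n) (𝓡 n) (φ (t - t₀)) (φ t₀ p) (J t₀) := by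
  obtain ⟨c, hc, rfl, hJc⟩ := hJ
  have hΓ : (fun s => φ t (c s)) = φ (t - t₀) ∘ fun s => φ t₀ (c s) := by
    funext s
    exact (hφ.apply_sub_apply t₀ t (c s)).symm
  have hΓ₀ : MDifferentiableAt 𝓘(ℝ, ℝ) (𝓡 n) (fun s => φ t₀ (c s)) 0 :=
    ((hφ.contMDiff_apply t₀).comp hc).mdifferentiableAt (by simp)
  rw [hJc t, hJc t₀, hΓ,
    mfderiv_comp 0 ((hφ.contMDiff_apply (t - t₀)).mdifferentiableAt (by simp)) hΓ₀]
  rfl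

theorem adapted_jacobi_field_zero_iff_general
    {n : ℕ} {M : Type*} [TopologicalSpace M]
    [ChartedSpace (EuclideanSpace ℝ (Fin n)) M] [IsManifold (𝓡 n) (⊤ : ℕ∞) M]
    (X : ∀ p : M, TangentSpace (𝓡 n) p)
    (φ : ℝ → M → M) (hcomplete : IsFlowOf φ X) (p : M)
    (J : ∀ t : ℝ, TangentSpace (𝓡 n) (φ t p)) (hJ : IsAdaptedJacobiField φ p J) :
    (∀ t : ℝ, J t = 0) ↔ ∃ t₀ : ℝ, J t₀ = 0 := by
  refine ⟨fun h => ⟨0, h 0⟩, fun ⟨t₀, ht₀⟩ t => ?_⟩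
  rw [hJ.eq_mfderiv_flow hcomplete t₀ t, ht₀]
  exact map_zero _

/-- Corollary 4.4.  Let `J` be a Jacobi field adapted to a complete geodesic
unit vector field `X` on a Riemannian manifold.  Then `J` vanishes identically if and only if
`J(t₀) = 0` for some `t₀ ∈ ℝ`. -/
theorem adapted_jacobi_field_zero_iff
    {n : ℕ} {M : Type*} [TopologicalSpace M]
    [ChartedSpace (EuclideanSpace ℝ (Fin n)) M] [IsManifold (𝓡 n) (⊤ : ℕ∞) M]
    (G : RiemannianMetric n M) (D : LeviCivitaConnection n M G)
    (X : ∀ p : M, TangentSpace (𝓡 n) p) (hX : SmoothVF X)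
    (hunit : IsUnitField G X) (hgeo : D.IsGeodesicField X)
    (φ : ℝ → M → M) (hcomplete : IsFlowOf φ X) (p : M)
    (J : ∀ t : ℝ, TangentSpace (𝓡 n) (φ t p)) (hJ : IsAdaptedJacobiField φ p J) :
    (∀ t : ℝ, J t = 0) ↔ ∃ t₀ : ℝ, J t₀ = 0 :=
  adapted_jacobi_field_zero_iff_general X φ hcomplete p J hJ
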